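/- Let G = (V,E) be the complete graph on N vertices (N finite) with injective positive edge weights, and let T be its unique minimum spanning tree. For a vertex subset S ⊆ V with |S| = n, where 2 ≤ n ≤ N, let T_S denote the unique minimum spanning tree of the subgraph induced by S (which is complete, hence connected, so |T_S| = n − 1). Then the sum over all n-element subsets S of V of |T ∩ T_S| equals (n/N)·(n−1)·C(N,n), where C(N,n) is the binomial coefficient. Equivalently, if S is chosen uniformly at random among n-element subsets of V, then E(|T ∩ T_S| / |T_S|) = n/N, and for an edge e chosen uniformly at random from E independently of S, P(e ∈ T | e ∈ T_S) = n/N. -/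

import Mathlib

/-!
An edge `e = uv` of `T` with both ends in `S` lies in `T_S`. Otherwise the `T_S`-path from `u` to
`v` crosses the cut of `T - e` at an edge `f`. In a minimum spanning forest, trading an edge for
one that reconnects the two pieces gives another spanning forest, so `w e ≤ w f` (trade `e` for
`f` in `T`) and `w f ≤ w e` (trade `f` for `e` in `T_S`); injectivity of `w` forces `f = e`.
Hence `T ∩ T_S` is the set of edges of `T` inside `S`, and double counting gives
`∑_S |T ∩ T_S| = (N - 1) C(N - 2, n - 2) = (n / N) (n - 1) C(N, n)`. The other two identities
follow from `|T_S| = n - 1`.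
-/

/-- `T` is a spanning tree of `G`: an acyclic set of edges of `G` such that every vertex
is an endpoint of some edge in `T` and the graph `(V, T)` is connected. -/
def IsSpanningTree {V : Type*} (G : SimpleGraph V) (T : Finset (Sym2 V)) : Prop :=
  (T : Set (Sym2 V)) ⊆ G.edgeSet ∧
    (∀ v : V, ∃ e ∈ T, v ∈ e) ∧
    (SimpleGraph.fromEdgeSet (T : Set (Sym2 V))).IsAcyclic ∧
    (SimpleGraph.fromEdgeSet (T : Set (Sym2 V))).Connected

/-- `T` is a minimum spanning tree of `G` with respect to the weights `w`. -/
def IsMST {V : Type*} (G : SimpleGraph V) (w : Sym2 V → ℝ) (T : Finset (Sym2 V)) : Prop :=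
  IsSpanningTree G T ∧
    ∀ T' : Finset (Sym2 V), IsSpanningTree G T' → ∑ e ∈ T, w e ≤ ∑ e ∈ T', w e

/-- `T` is a spanning forest of `G`. -/
def IsSpanningForest {V : Type*} (G : SimpleGraph V) (T : Finset (Sym2 V)) : Prop :=
  (T : Set (Sym2 V)) ⊆ G.edgeSet ∧
    (SimpleGraph.fromEdgeSet (T : Set (Sym2 V))).IsAcyclic ∧
    ∀ u v : V, G.Reachable u v → (SimpleGraph.fromEdgeSet (T : Set (Sym2 V))).Reachable u v

/-- `T` is a minimum spanning forest of `G` with respect to the weights `w`. -/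
def IsMSF {V : Type*} (G : SimpleGraph V) (w : Sym2 V → ℝ) (T : Finset (Sym2 V)) : Prop :=
  IsSpanningForest G T ∧
    ∀ T' : Finset (Sym2 V), IsSpanningForest G T' → ∑ e ∈ T, w e ≤ ∑ e ∈ T', w e

/-- The edge set of the subgraph of the complete graph induced by `S`: all edges with
both endpoints in `S`. -/
def inducedEdges {V : Type*} (G : SimpleGraph V) (S : Finset V) : Set (Sym2 V) :=
  {e ∈ G.edgeSet | ∀ v ∈ e, v ∈ S}

open Finset

namespace SimpleGraph
variable {V : Type*} {G : SimpleGraph V} {u v x y a b : V}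

theorem reachable_sup_edge_iff :
    (G ⊔ edge u v).Reachable a b ↔ G.Reachable a b ∨
      (G.Reachable a u ∧ G.Reachable v b) ∨ (G.Reachable a v ∧ G.Reachable u b) := by
  constructor
  · rintro ⟨p⟩
    induction p with
    | nil => exact .inl .rfl
    | cons h p ih =>
      rw [sup_adj, edge_adj] at h
      rcases h with h | ⟨⟨rfl, rfl⟩ | ⟨rfl, rfl⟩, -⟩ <;>
        grind [Adj.reachable, Reachable.trans, Reachable.symm, Reachable.refl]
  · have hle : G ≤ G ⊔ edge u v := le_sup_left
    have huv : (G ⊔ edge u v).Reachable u v := by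
      by_cases h : u = v
      · exact h ▸ .rfl
      · exact Adj.reachable (by simp [edge_adj, h])
    rintro (h | ⟨h₁, h₂⟩ | ⟨h₁, h₂⟩)
    · exact h.mono hle
    · exact (h₁.mono hle).trans (huv.trans (h₂.mono hle))
    · exact (h₁.mono hle).trans (huv.symm.trans (h₂.mono hle))

theorem Reachable.sup_edge_exchange (hab : (G ⊔ edge u v).Reachable a b)
    (hxy : (G ⊔ edge u v).Reachable x y) (hnr : ¬G.Reachable x y) :
    (G ⊔ edge x y).Reachable a b := by
  rw [reachable_sup_edge_iff] at hxy hab ⊢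
  grind [Reachable.trans, Reachable.symm]

theorem IsAcyclic.not_reachable_deleteEdges_of_mem_edges (hG : G.IsAcyclic) {p : G.Walk u v}
    (hp : p.IsPath) {e : Sym2 V} (he : e ∈ p.edges) : ¬(G.deleteEdges {e}).Reachable u v := by
  classical
  cases e
  rw [reachable_deleteEdges_iff_exists_walk]
  rintro ⟨q, hq⟩
  have hpq : p = q.bypass :=
    congrArg Subtype.val ((hG.subsingleton_path u v).elim ⟨p, hp⟩ ⟨_, q.bypass_isPath⟩)
  exact hq (q.edges_bypass_subset_edges (hpq ▸ he))

theorem IsAcyclic.card_edgeFinset_add_one [Fintype V] [DecidableRel G.Adj] {s : Finset V}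
    (hG : G.IsAcyclic) (hsupp : G.support ⊆ s) (hs : s.Nonempty)
    (hreach : ∀ u ∈ s, ∀ v ∈ s, G.Reachable u v) : #G.edgeFinset + 1 = #s := by
  classical
  have : Nonempty s := hs.to_subtype
  have htree : (G.induce s).IsTree := by
    refine ⟨Connected.mk fun ⟨u, hu⟩ ⟨v, hv⟩ ↦ ?_, hG.induce _⟩
    obtain ⟨p⟩ := hreach u hu v hv
    have hps : ∀ z ∈ p.support, z ∈ (s : Set V) := by
      intro z hz
      by_cases hnil : p.Nil
      · rw [Walk.nil_iff_support_eq.1 hnil, List.mem_singleton] at hz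
        exact hz ▸ hu
      · obtain ⟨z', -, hzz'⟩ := adj_of_mem_walk_support p hnil hz
        exact hsupp ⟨z', hzz'⟩
    exact ⟨p.induce _ hps⟩
  rw [← card_edgeFinset_induce_of_support_subset hsupp]
  convert htree.card_edgeFinset using 2
  · congr!
  · simp

end SimpleGraph

open SimpleGraph

section SpanningForests
variable {V : Type*} {G H : SimpleGraph V} {w : Sym2 V → ℝ} {F T : Finset (Sym2 V)}
  {e : Sym2 V} {x y : V}

lemma IsMST.isMSF [Nontrivial V] (hT : IsMST ⊤ w T) : IsMSF ⊤ w T := by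
  refine ⟨⟨hT.1.1, hT.1.2.2.1, fun a b _ ↦ hT.1.2.2.2.preconnected a b⟩, fun T' hT' ↦ hT.2 T' ?_⟩
  have hconn : (fromEdgeSet (T' : Set (Sym2 V))).Connected := ⟨fun a b ↦ hT'.2.2 a b reachable_top⟩
  refine ⟨hT'.1, fun a ↦ ?_, hT'.2.1, hconn⟩
  obtain ⟨b, hab⟩ := hconn.preconnected.exists_adj_of_nontrivial a
  exact ⟨s(a, b), ((fromEdgeSet_adj _).1 hab).1, Sym2.mem_mk_left a b⟩

lemma edgeSet_fromEdgeSet_inducedEdges (G : SimpleGraph V) (S : Finset V) :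
    (fromEdgeSet (inducedEdges G S)).edgeSet = G.edgeSet ∩ ↑S.sym2 := by
  ext e
  simp only [edgeSet_fromEdgeSet, inducedEdges, Set.mem_sdiff, Set.mem_ofPred_eq,
    Set.mem_inter_iff, mem_coe, mem_sym2_iff, Sym2.mem_diagSet]
  exact ⟨fun h ↦ h.1, fun h ↦ ⟨h, G.not_isDiag_of_mem_edgeSet h.1⟩⟩

variable [DecidableEq V]

lemma fromEdgeSet_coe_insert (F : Finset (Sym2 V)) (x y : V) :
    fromEdgeSet (↑(insert s(x, y) F) : Set (Sym2 V)) = fromEdgeSet ↑F ⊔ edge x y := by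
  rw [coe_insert, Set.insert_eq, fromEdgeSet_union, sup_comm]
  rfl

lemma fromEdgeSet_coe_erase (F : Finset (Sym2 V)) (e : Sym2 V) :
    fromEdgeSet (↑(F.erase e) : Set (Sym2 V)) = (fromEdgeSet ↑F).deleteEdges {e} := by
  rw [coe_erase, deleteEdges_fromEdgeSet]

lemma IsSpanningForest.insert_erase (hF : IsSpanningForest H F) (he : e ∈ F) (hxy : H.Adj x y)
    (hnr : ¬((fromEdgeSet ↑F).deleteEdges {e}).Reachable x y) :
    IsSpanningForest H (insert s(x, y) (F.erase e)) := by
  obtain ⟨hsub, hac, hreach⟩ := hF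
  induction e using Sym2.ind with | _ u v => ?_
  rw [← fromEdgeSet_coe_erase] at hnr
  have hsplit : fromEdgeSet (F : Set (Sym2 V)) = fromEdgeSet ↑(F.erase s(u, v)) ⊔ edge u v := by
    rw [← fromEdgeSet_coe_insert, Finset.insert_erase he]
  have herase : fromEdgeSet (↑(F.erase s(u, v)) : Set (Sym2 V)) ≤ fromEdgeSet ↑F :=
    fromEdgeSet_mono (coe_subset.2 (erase_subset _ _))
  refine ⟨?_, ?_, fun a b hab ↦ ?_⟩
  · rw [coe_insert, Set.insert_subset_iff]
    exact ⟨hxy, (coe_subset.2 (erase_subset _ _)).trans hsub⟩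
  · rw [fromEdgeSet_coe_insert]
    exact (hac.anti herase).sup_edge_of_not_reachable hnr
  · rw [hsplit] at hreach
    rw [fromEdgeSet_coe_insert]
    exact (hreach a b hab).sup_edge_exchange (hreach x y hxy.reachable) hnr

lemma IsMSF.weight_le_of_not_reachable (hF : IsMSF H w F) (he : e ∈ F) (hxy : H.Adj x y)
    (hnr : ¬((fromEdgeSet ↑F).deleteEdges {e}).Reachable x y) : w e ≤ w s(x, y) := by
  have hxy' : s(x, y) ∉ F.erase e := fun h ↦
    hnr (fromEdgeSet_coe_erase F e ▸ ((fromEdgeSet_adj _).2 ⟨h, hxy.ne⟩).reachable)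
  have hmin := hF.2 _ (hF.1.insert_erase he hxy hnr)
  rw [sum_insert hxy', ← add_sum_erase F w he] at hmin
  linarith

lemma IsMSF.mem_of_le (hinj : Set.InjOn w G.edgeSet) (hHG : H ≤ G) (hT : IsMSF G w T)
    (hF : IsMSF H w F) (heT : e ∈ T) (heH : e ∈ H.edgeSet) : e ∈ F := by
  induction e using Sym2.ind with | _ u v => ?_
  by_contra huvF
  have huv : H.Adj u v := heH
  obtain ⟨p, hp⟩ := (hF.1.2.2 u v huv.reachable).exists_isPath
  set T₀ := (fromEdgeSet (T : Set (Sym2 V))).deleteEdges {s(u, v)}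
  have hsep : ¬T₀.Reachable u v :=
    isAcyclic_iff_forall_adj_isBridge.1 hT.1.2.1 ((fromEdgeSet_adj _).2 ⟨heT, huv.ne⟩)
  obtain ⟨⟨⟨x, y⟩, hxy⟩, hd, hx, hy⟩ :=
    p.exists_boundary_dart {z | T₀.Reachable u z} .rfl hsep
  have hxyF : s(x, y) ∈ F := ((fromEdgeSet_adj _).1 hxy).1
  have hxyH : H.Adj x y := hF.1.1 hxyF
  have hcut : w s(u, v) ≤ w s(x, y) :=
    hT.weight_le_of_not_reachable heT (hHG hxyH) fun h ↦ hy (hx.trans h)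
  have hcycle : w s(x, y) ≤ w s(u, v) :=
    hF.weight_le_of_not_reachable hxyF huv
      (hF.1.2.1.not_reachable_deleteEdges_of_mem_edges hp (List.mem_map_of_mem hd))
  exact huvF (hinj (edgeSet_mono hHG hxyH) (edgeSet_mono hHG heH) (hcycle.antisymm hcut) ▸ hxyF)

lemma IsMSF.inter_eq_filter_mem_sym2 {S : Finset V} (hinj : Set.InjOn w G.edgeSet)
    (hT : IsMSF G w T) (hF : IsMSF (fromEdgeSet (inducedEdges G S)) w F) :
    T ∩ F = {e ∈ T | e ∈ S.sym2} := by
  have hedges := edgeSet_fromEdgeSet_inducedEdges G S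
  have hle : fromEdgeSet (inducedEdges G S) ≤ G :=
    edgeSet_subset_edgeSet.1 (hedges ▸ Set.inter_subset_left)
  ext e
  simp only [mem_inter, mem_filter]
  refine ⟨fun ⟨heT, heF⟩ ↦ ⟨heT, (hedges ▸ hF.1.1 heF).2⟩, fun ⟨heT, heS⟩ ↦ ⟨heT, ?_⟩⟩
  exact hT.mem_of_le hinj hle hF heT (hedges ▸ ⟨hT.1.1 heT, heS⟩)

end SpanningForests

section Counting
variable {V : Type*} [Fintype V] [DecidableEq V]

lemma card_add_one_of_isAcyclic {F : Finset (Sym2 V)} {S : Finset V}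
    (hF : ↑F ⊆ (⊤ : SimpleGraph V).edgeSet ∩ ↑S.sym2)
    (hac : (fromEdgeSet (F : Set (Sym2 V))).IsAcyclic) (hS : S.Nonempty)
    (hreach : ∀ u ∈ S, ∀ v ∈ S, (fromEdgeSet (F : Set (Sym2 V))).Reachable u v) :
    #F + 1 = #S := by
  classical
  have hsupp : (fromEdgeSet (F : Set (Sym2 V))).support ⊆ S := by
    rintro a ⟨b, hab⟩
    exact mem_sym2_iff.1 (hF ((fromEdgeSet_adj _).1 hab).1).2 a (Sym2.mem_mk_left a b)
  rw [← hac.card_edgeFinset_add_one hsupp hS hreach]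
  congr 2
  ext e
  simp only [mem_edgeFinset, edgeSet_fromEdgeSet, Set.mem_sdiff, mem_coe, Sym2.mem_diagSet]
  exact ⟨fun h ↦ ⟨h, by simpa using (hF h).1⟩, fun h ↦ h.1⟩

lemma sum_card_filter_mem_sym2 (T : Finset (Sym2 V)) (hT : ↑T ⊆ (⊤ : SimpleGraph V).edgeSet)
    {n : ℕ} (hn : 2 ≤ n) :
    ∑ S ∈ univ.powersetCard n, #{e ∈ T | e ∈ S.sym2} =
      #T * (Fintype.card V - 2).choose (n - 2) := by
  change ∑ S ∈ _, #(T.bipartiteAbove (fun (S : Finset V) e ↦ e ∈ S.sym2) S) = _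
  rw [sum_card_bipartiteAbove_eq_sum_card_bipartiteBelow]
  refine sum_const_nat fun e he ↦ ?_
  induction e using Sym2.ind with | _ u v => ?_
  have huv : u ≠ v := hT he
  have hpair : #({u, v} : Finset V) = 2 := card_pair huv
  rw [← hpair, ← card_univ, ← card_filter_powersetCard_subset _ _ _ (subset_univ _) (hpair ▸ hn)]
  congr 1
  ext S
  simp [bipartiteBelow, insert_subset_iff]

lemma IsSpanningTree.card_add_one {T : Finset (Sym2 V)} (hT : IsSpanningTree ⊤ T) :
    #T + 1 = Fintype.card V := by
  have : Nonempty V := hT.2.2.2.nonempty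
  rw [← card_univ]
  exact card_add_one_of_isAcyclic (by simpa using hT.1) hT.2.2.1 univ_nonempty
    fun u _ v _ ↦ hT.2.2.2.preconnected u v

lemma IsSpanningForest.card_add_one_of_inducedEdges {F : Finset (Sym2 V)} {S : Finset V}
    (hF : IsSpanningForest (fromEdgeSet (inducedEdges ⊤ S)) F) (hS : S.Nonempty) :
    #F + 1 = #S := by
  have hedges := edgeSet_fromEdgeSet_inducedEdges ⊤ S
  refine card_add_one_of_isAcyclic (hedges ▸ hF.1) hF.2.1 hS fun u hu v hv ↦ hF.2.2 u v ?_
  obtain rfl | huv := eq_or_ne u v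
  · exact .rfl
  · exact Adj.reachable (by rw [← mem_edgeSet, hedges]; simp [huv, hu, hv])

end Counting

theorem Nat.cast_sub_one_mul_choose_sub_two {n k : ℕ} (hk : 2 ≤ k) (hkn : k ≤ n) :
    (((n - 1) * (n - 2).choose (k - 2) : ℕ) : ℚ) = k / n * (k - 1) * n.choose k := by
  obtain ⟨k, rfl⟩ : ∃ k', k = k' + 2 := ⟨k - 2, by omega⟩
  obtain ⟨m, rfl⟩ : ∃ m, n = m + 2 := ⟨n - 2, by omega⟩
  have h₁ : ((m + 1 : ℕ) : ℚ) * m.choose k = (m + 1).choose (k + 1) * (k + 1 : ℕ) := by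
    exact_mod_cast Nat.add_one_mul_choose_eq m k
  have h₂ : ((m + 2 : ℕ) : ℚ) * (m + 1).choose (k + 1) = (m + 2).choose (k + 2) * (k + 2 : ℕ) := by
    exact_mod_cast Nat.add_one_mul_choose_eq (m + 1) (k + 1)
  simp only [Nat.add_sub_cancel, Nat.add_succ_sub_one]
  push_cast at h₁ h₂ ⊢
  field_simp
  linear_combination (m + 2 : ℚ) * h₁ + (k + 1 : ℚ) * h₂

theorem complete_graph_ppv_general {V : Type*} [Fintype V] [DecidableEq V]
    (w : Sym2 V → ℝ) (N n : ℕ) (hN : Fintype.card V = N)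
    (hn : 2 ≤ n) (hnN : n ≤ N)
    (hinj : Set.InjOn w (⊤ : SimpleGraph V).edgeSet)
    (T : Finset (Sym2 V)) (hT : IsMST (⊤ : SimpleGraph V) w T)
    (TS : Finset V → Finset (Sym2 V))
    (hTS : ∀ S ∈ Finset.univ.powersetCard n,
      IsMSF (SimpleGraph.fromEdgeSet (inducedEdges (⊤ : SimpleGraph V) S)) w (TS S)) :
    (∑ S ∈ Finset.univ.powersetCard n, ((T ∩ TS S).card : ℚ))
        = ((n : ℚ) / N) * ((n : ℚ) - 1) * (N.choose n) ∧
    (∑ S ∈ Finset.univ.powersetCard n, ((T ∩ TS S).card : ℚ) / ((TS S).card : ℚ))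
        / (N.choose n : ℚ) = (n : ℚ) / N ∧
    (∑ S ∈ Finset.univ.powersetCard n, ((T ∩ TS S).card : ℚ))
        / (∑ S ∈ Finset.univ.powersetCard n, ((TS S).card : ℚ)) = (n : ℚ) / N := by
  have : Nontrivial V := Fintype.one_lt_card_iff_nontrivial.1 (by omega)
  have hcardT : #T = N - 1 := by have := hT.1.card_add_one; omega
  have hcardTS : ∀ S ∈ univ.powersetCard n, (#(TS S) : ℚ) = n - 1 := fun S hS ↦ by
    obtain ⟨-, hSn⟩ := mem_powersetCard.1 hS
    have := (hTS S hS).1.card_add_one_of_inducedEdges (card_pos.1 (by omega))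
    rw [← hSn, ← this]
    push_cast
    ring
  have hsum : ∑ S ∈ univ.powersetCard n, (#(T ∩ TS S) : ℚ) = n / N * (n - 1) * N.choose n := by
    rw [← Nat.cast_sum, sum_congr rfl fun S hS ↦ by
        rw [hT.isMSF.inter_eq_filter_mem_sym2 hinj (hTS S hS)],
      sum_card_filter_mem_sym2 T hT.1.1 hn, hcardT, hN]
    exact Nat.cast_sub_one_mul_choose_sub_two hn hnN
  have hn1 : (n : ℚ) - 1 ≠ 0 := sub_ne_zero.2 (by exact_mod_cast (by omega : n ≠ 1))
  have hC : (N.choose n : ℚ) ≠ 0 := by exact_mod_cast (Nat.choose_pos hnN).ne'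
  refine ⟨hsum, ?_, ?_⟩
  · rw [sum_congr rfl fun S hS ↦ by rw [hcardTS S hS], ← sum_div, hsum]
    field_simp
  · rw [sum_congr rfl hcardTS, sum_const, card_powersetCard, card_univ, hN, nsmul_eq_mul, hsum]
    field_simp

/-- For the complete graph on `N` vertices with distinct positive edge weights,
MST `T`, and, for each `n`-subset `S` of the vertices (`2 ≤ n ≤ N`), the MST `T_S` of
the subgraph induced by `S` (of cardinality `n - 1`):
the sum over all `n`-subsets `S` of `|T ∩ T_S|` equals `(n/N)·(n-1)·C(N,n)`;
equivalently, for `S` uniform over `n`-subsets, `E(|T ∩ T_S|/|T_S|) = n/N`, and for `e`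
uniform over the edges, independent of `S`, `P(e ∈ T ∣ e ∈ T_S) = n/N`, both expressed
as ratios of the corresponding sums of counts. -/
theorem complete_graph_ppv {V : Type*} [Fintype V] [DecidableEq V]
    (w : Sym2 V → ℝ) (N n : ℕ) (hN : Fintype.card V = N)
    (hn : 2 ≤ n) (hnN : n ≤ N)
    (hpos : ∀ e ∈ (⊤ : SimpleGraph V).edgeSet, 0 < w e)
    (hinj : Set.InjOn w (⊤ : SimpleGraph V).edgeSet)
    (T : Finset (Sym2 V)) (hT : IsMST (⊤ : SimpleGraph V) w T)
    (TS : Finset V → Finset (Sym2 V))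
    (hTS : ∀ S ∈ Finset.univ.powersetCard n,
      IsMSF (SimpleGraph.fromEdgeSet (inducedEdges (⊤ : SimpleGraph V) S)) w (TS S)) :
    (∑ S ∈ Finset.univ.powersetCard n, ((T ∩ TS S).card : ℚ))
        = ((n : ℚ) / N) * ((n : ℚ) - 1) * (N.choose n) ∧
    (∑ S ∈ Finset.univ.powersetCard n, ((T ∩ TS S).card : ℚ) / ((TS S).card : ℚ))
        / (N.choose n : ℚ) = (n : ℚ) / N ∧
    (∑ S ∈ Finset.univ.powersetCard n, ((T ∩ TS S).card : ℚ))
        / (∑ S ∈ Finset.univ.powersetCard n, ((TS S).card : ℚ)) = (n : ℚ) / N :=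
  complete_graph_ppv_general w N n hN hn hnN hinj T hT TS hTS
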